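/- Fix an integer n ≥ 1, a real constant Λ ≤ 0, a real K > 0, and η ∈ (−∞, ∞]. Let (a, b, c) be an unstable trajectory of (0, K, K) on (−∞, η), and suppose a(u) < b(u) for all u < η. Then b and c are monotone nondecreasing on (−∞, η); in particular b(u) ≥ K and c(u) ≥ K for all u < η. -/

import Mathlib

open Filter Set

/-- A solution (a, b, c) of the reduced Kähler–Einstein system on the interval
(−∞, η) (η ∈ (−∞, ∞] encoded as an `EReal`), positive there, and converging to the
critical point (0, K, K) as u → −∞: an unstable trajectory of (0, K, K). -/
def IsUnstableTrajectory (n : ℕ) (Λ K : ℝ) (η : EReal) (a b c : ℝ → ℝ) : Prop :=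
  (∀ u : ℝ, (u : EReal) < η →
    HasDerivAt a ((1/2) * a u * (b u ^ 2 + c u ^ 2 - a u ^ 2)) u ∧
    HasDerivAt b ((1/2) * b u * (c u ^ 2 + a u ^ 2 - b u ^ 2)) u ∧
    HasDerivAt c ((1/2) * (n : ℝ) * c u *
      (a u ^ 2 + b u ^ 2 - c u ^ 2 - (2 * Λ / (n : ℝ)) * a u ^ 2 * b u ^ 2)) u ∧
    0 < a u ∧ 0 < b u ∧ 0 < c u) ∧
  Tendsto a atBot (nhds 0) ∧ Tendsto b atBot (nhds K) ∧ Tendsto c atBot (nhds K)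

/-- The filter of approach to η ∈ (−∞, ∞] from the left within ℝ:
it is 𝓝[<] η when η is real, and `atTop` when η = ∞. -/
noncomputable def nhdsLeft (η : EReal) : Filter ℝ :=
  Filter.comap (fun u : ℝ => (u : EReal)) (nhdsWithin η (Set.Iio η))

/- STATEMENT 9: on an unstable trajectory of (0, K, K) with K > 0 and Λ ≤ 0,
b and c are monotone nondecreasing on (−∞, η); in particular b ≥ K and c ≥ K there. -/


private lemma key_neg (u₀ : ℝ) (f f' : ℝ → ℝ)
    (hf : ∀ u : ℝ, u ≤ u₀ → HasDerivAt f (f' u) u)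
    (hzero : ∀ u : ℝ, u ≤ u₀ → f u = 0 → 0 < f' u)
    (hneg : f u₀ < 0) : ∀ v ≤ u₀, f v < 0 := by
  intro v hv
  by_contra hge
  push_neg at hge
  have hvlt : v < u₀ := by
    rcases lt_or_eq_of_le hv with h | h
    · exact h
    · exact absurd (h ▸ hge) (not_le.mpr hneg)
  set S : Set ℝ := {u | u ∈ Icc v u₀ ∧ 0 ≤ f u} with hS
  have hvS : v ∈ S := ⟨⟨le_refl v, hv⟩, hge⟩
  have hSne : S.Nonempty := ⟨v, hvS⟩
  have hSbdd : BddAbove S := ⟨u₀, fun x hx => hx.1.2⟩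
  have hu₂le : sSup S ≤ u₀ := csSup_le hSne fun x hx => hx.1.2
  obtain ⟨u₂, hu₂def⟩ : ∃ u₂, u₂ = sSup S := ⟨_, rfl⟩
  rw [← hu₂def] at hu₂le
  have hu₂ge : v ≤ u₂ := hu₂def ▸ le_csSup hSbdd hvS
  have hcont : ContinuousAt f u₂ := (hf u₂ hu₂le).continuousAt
  obtain ⟨w, hwmono, hwten, hwmem⟩ := exists_seq_tendsto_sSup hSne hSbdd
  rw [← hu₂def] at hwten
  have hge₂ : 0 ≤ f u₂ :=
    ge_of_tendsto (hcont.tendsto.comp hwten) (Eventually.of_forall fun k => (hwmem k).2)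
  have hlt₂ : u₂ < u₀ := by
    rcases lt_or_eq_of_le hu₂le with hx | hx
    · exact hx
    · exact absurd (hx ▸ hge₂) (not_le.mpr hneg)
  have hforall : ∀ u, u ∈ Ioc u₂ u₀ → f u < 0 := by
    intro u hu
    by_contra hcon
    push_neg at hcon
    have hle := le_csSup hSbdd ⟨⟨hu₂ge.trans hu.1.le, hu.2⟩, hcon⟩
    rw [← hu₂def] at hle
    exact absurd hle (not_le.mpr hu.1)
  have hle₂ : f u₂ ≤ 0 := by
    have h1 : Tendsto f (nhdsWithin u₂ (Ioi u₂)) (nhds (f u₂)) :=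
      hcont.continuousWithinAt.tendsto
    refine le_of_tendsto h1 ?_
    filter_upwards [Ioc_mem_nhdsGT_of_mem ⟨le_refl u₂, hlt₂⟩] with u hu
    exact (hforall u hu).le
  have hf0 : f u₂ = 0 := le_antisymm hle₂ hge₂
  have hpos := hzero u₂ hu₂le hf0
  have hslope := hasDerivAt_iff_tendsto_slope.mp (hf u₂ hu₂le)
  have h1 : ∀ᶠ u in nhdsWithin u₂ {u₂}ᶜ, 0 < slope f u₂ u := hslope (Ioi_mem_nhds hpos)
  have h2 : ∀ᶠ u in nhdsWithin u₂ (Ioi u₂), 0 < slope f u₂ u :=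
    h1.filter_mono (nhdsWithin_mono u₂ fun x hx => (ne_of_gt hx : x ≠ u₂))
  have h3 : Ioo u₂ u₀ ∈ nhdsWithin u₂ (Ioi u₂) := Ioo_mem_nhdsGT_of_mem ⟨le_refl u₂, hlt₂⟩
  obtain ⟨u₃, hs3, hmem3⟩ := (h2.and (eventually_of_mem h3 fun x hx => hx)).exists
  rw [slope_def_field, hf0, sub_zero] at hs3
  have hden : 0 < u₃ - u₂ := sub_pos.mpr hmem3.1
  have hfu₃ : 0 < f u₃ := by
    rcases div_pos_iff.mp hs3 with ⟨hx, _⟩ | ⟨_, hx⟩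
    · exact hx
    · linarith
  exact absurd hfu₃ (not_lt.mpr (hforall u₃ ⟨hmem3.1, hmem3.2.le⟩).le)

private lemma ge_lim_of_deriv_nonneg (u₀ K : ℝ) (h h' : ℝ → ℝ)
    (hd : ∀ u : ℝ, u ≤ u₀ → HasDerivAt h (h' u) u)
    (hpos : ∀ u : ℝ, u ≤ u₀ → 0 ≤ h' u)
    (hlim : Tendsto h atBot (nhds K)) : K ≤ h u₀ := by
  have hmono : MonotoneOn h (Iic u₀) := by
    apply monotoneOn_of_deriv_nonneg (convex_Iic u₀)
    · exact fun x hx => (hd x hx).continuousAt.continuousWithinAt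
    · intro x hx
      rw [interior_Iic] at hx
      exact (hd x hx.le).differentiableAt.differentiableWithinAt
    · intro x hx
      rw [interior_Iic] at hx
      rw [(hd x hx.le).deriv]
      exact hpos x hx.le
  refine le_of_tendsto hlim ?_
  filter_upwards [eventually_le_atBot u₀] with w hw
  exact hmono (mem_Iic.mpr hw) (mem_Iic.mpr le_rfl) hw

private lemma le_lim_of_deriv_nonpos (u₀ K : ℝ) (h h' : ℝ → ℝ)
    (hd : ∀ u : ℝ, u ≤ u₀ → HasDerivAt h (h' u) u)
    (hneg : ∀ u : ℝ, u ≤ u₀ → h' u ≤ 0)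
    (hlim : Tendsto h atBot (nhds K)) : h u₀ ≤ K := by
  have := ge_lim_of_deriv_nonneg u₀ (-K) (fun u => -h u) (fun u => -h' u)
    (fun u hu => (hd u hu).neg) (fun u hu => neg_nonneg.mpr (hneg u hu)) hlim.neg
  simpa using this


set_option maxHeartbeats 1000000 in
theorem b_c_monotone
    (n : ℕ) (hn : 1 ≤ n) (Λ : ℝ) (hΛ : Λ ≤ 0) (K : ℝ) (hK : 0 < K)
    (η : EReal) (hη : η ≠ ⊥)
    (a b c : ℝ → ℝ) (h : IsUnstableTrajectory n Λ K η a b c)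
    (hab : ∀ u : ℝ, (u : EReal) < η → a u < b u) :
    MonotoneOn b {u : ℝ | (u : EReal) < η} ∧
    MonotoneOn c {u : ℝ | (u : EReal) < η} ∧
    ∀ u : ℝ, (u : EReal) < η → K ≤ b u ∧ K ≤ c u := by
  obtain ⟨hsys, hla, hlb, hlc⟩ := h
  have hmemle : ∀ {u v : ℝ}, u ≤ v → (v : EReal) < η → (u : EReal) < η :=
    fun {u v} huv hv => lt_of_le_of_lt (EReal.coe_le_coe_iff.mpr huv) hv
  have hn0 : (0:ℝ) < (n:ℝ) := by exact_mod_cast Nat.lt_of_lt_of_le Nat.zero_lt_one hn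
  have hn1 : (1:ℝ) ≤ (n:ℝ) := by exact_mod_cast hn
  obtain ⟨m, hm⟩ : ∃ m : ℝ, m = 2 * Λ / (n:ℝ) := ⟨_, rfl⟩
  simp only [← hm] at hsys
  have hμ : m ≤ 0 := by
    rw [hm, div_nonpos_iff]
    right
    exact ⟨by linarith, hn0.le⟩
  obtain ⟨F, hF⟩ : ∃ F : ℝ → ℝ, F = fun u => c u ^ 2 + a u ^ 2 - b u ^ 2 := ⟨_, rfl⟩
  obtain ⟨G, hG⟩ : ∃ G : ℝ → ℝ, G = fun u =>
      a u ^ 2 + b u ^ 2 - c u ^ 2 - m * a u ^ 2 * b u ^ 2 := ⟨_, rfl⟩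
  have hb' : ∀ u : ℝ, (u : EReal) < η → HasDerivAt b ((1/2) * b u * F u) u := by
    intro u hu
    rw [hF]
    exact (hsys u hu).2.1
  have hc' : ∀ u : ℝ, (u : EReal) < η → HasDerivAt c ((1/2) * (n:ℝ) * c u * G u) u := by
    intro u hu
    rw [hG]
    exact (hsys u hu).2.2.1
  obtain ⟨P, hP⟩ : ∃ P : ℝ → ℝ, P = fun u => b u ^ 2 + c u ^ 2 - a u ^ 2 := ⟨_, rfl⟩
  obtain ⟨DF, hDF⟩ : ∃ DF : ℝ → ℝ,
      DF = fun u => (n:ℝ) * c u ^ 2 * G u + a u ^ 2 * P u - b u ^ 2 * F u := ⟨_, rfl⟩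
  obtain ⟨DG, hDG⟩ : ∃ DG : ℝ → ℝ, DG = fun u =>
      a u ^ 2 * P u + b u ^ 2 * F u - (n:ℝ) * c u ^ 2 * G u
        - m * (a u ^ 2 * P u * b u ^ 2 + a u ^ 2 * b u ^ 2 * F u) := ⟨_, rfl⟩
  have hFd : ∀ u : ℝ, (u : EReal) < η → HasDerivAt F (DF u) u := by
    intro u hu
    obtain ⟨hA, hB, hC, hpa, hpb, hpc⟩ := hsys u hu
    have hder := ((hC.pow 2).add (hA.pow 2)).sub (hB.pow 2)
    refine (hder.congr_of_eventuallyEq (Eventually.of_forall fun x => ?_)).congr_deriv ?_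
    · rw [hF]; rfl
    simp only [hDF, hP, hG, hF]
    push_cast
    ring
  have hGd : ∀ u : ℝ, (u : EReal) < η → HasDerivAt G (DG u) u := by
    intro u hu
    obtain ⟨hA, hB, hC, hpa, hpb, hpc⟩ := hsys u hu
    have hder := (((hA.pow 2).add (hB.pow 2)).sub (hC.pow 2)).sub
      (((hA.pow 2).const_mul (m)).mul (hB.pow 2))
    refine (hder.congr_of_eventuallyEq (Eventually.of_forall fun x => ?_)).congr_deriv ?_
    · rw [hG]; rfl
    simp only [hDG, hP, hG, hF, Pi.pow_apply]
    push_cast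
    ring
  have hFGpos : ∀ u : ℝ, (u : EReal) < η → 0 < F u + G u := by
    intro u hu
    obtain ⟨_, _, _, hpa, hpb, hpc⟩ := hsys u hu
    have ha2 : 0 < a u ^ 2 := by positivity
    have hb2 : 0 < b u ^ 2 := by positivity
    simp only [hF, hG]
    nlinarith [mul_nonneg (neg_nonneg.mpr hμ) (mul_pos ha2 hb2).le]
  have hzeroF : ∀ u : ℝ, (u : EReal) < η → F u = 0 → 0 < DF u := by
    intro u hu h0
    obtain ⟨_, _, _, hpa, hpb, hpc⟩ := hsys u hu
    have hab' := hab u hu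
    have ha2 : 0 < a u ^ 2 := by positivity
    have hba : 0 < b u ^ 2 - a u ^ 2 := by nlinarith
    have hc2 : c u ^ 2 = b u ^ 2 - a u ^ 2 := by
      have h0' := h0
      simp only [hF] at h0'; linarith
    have h2a : 0 < 2 * a u ^ 2 - m * a u ^ 2 * b u ^ 2 := by
      nlinarith [mul_nonneg (neg_nonneg.mpr hμ) (mul_nonneg ha2.le (sq_nonneg (b u)))]
    simp only [hDF, hP, hG, h0, mul_zero, sub_zero]
    rw [hc2]
    nlinarith [mul_nonneg (mul_nonneg hn0.le hba.le) h2a.le, mul_pos ha2 hba,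
      mul_pos (mul_pos hn0 hba) h2a]
  have hzeroG : ∀ u : ℝ, (u : EReal) < η → G u = 0 → 0 < DG u := by
    intro u hu h0
    obtain ⟨_, _, _, hpa, hpb, hpc⟩ := hsys u hu
    have ha2 : 0 < a u ^ 2 := by positivity
    have hb2 : 0 < b u ^ 2 := by positivity
    have hc2 : c u ^ 2 = a u ^ 2 + b u ^ 2 - m * a u ^ 2 * b u ^ 2 := by
      have h0' := h0
      simp only [hG] at h0'; linarith
    have hnμ : 0 ≤ -(m) := neg_nonneg.mpr hμ
    have hPpos : 0 < 2 * b u ^ 2 - m * a u ^ 2 * b u ^ 2 := by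
      nlinarith [mul_nonneg hnμ (mul_nonneg ha2.le hb2.le)]
    have hFpos : 0 < 2 * a u ^ 2 - m * a u ^ 2 * b u ^ 2 := by
      nlinarith [mul_nonneg hnμ (mul_nonneg ha2.le hb2.le)]
    simp only [hDG, hP, hF, h0, mul_zero, sub_zero]
    rw [hc2]
    nlinarith [mul_pos ha2 hPpos, mul_pos hb2 hFpos,
      mul_nonneg hnμ (add_nonneg
        (mul_nonneg (mul_nonneg ha2.le hPpos.le) hb2.le)
        (mul_nonneg (mul_nonneg ha2.le hb2.le) hFpos.le))]
  -- F is nonnegative on the trajectory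
  have hFnn : ∀ u : ℝ, (u : EReal) < η → 0 ≤ F u := by
    intro u hu
    by_contra hneg
    push_neg at hneg
    have hall : ∀ v ≤ u, F v < 0 :=
      key_neg u F DF (fun v hv => hFd v (hmemle hv hu)) (fun v hv => hzeroF v (hmemle hv hu)) hneg
    have hble : b u ≤ K := by
      refine le_lim_of_deriv_nonpos u K b (fun v => (1/2) * b v * F v)
        (fun v hv => hb' v (hmemle hv hu)) (fun v hv => ?_) hlb
      have hpb := (hsys v (hmemle hv hu)).2.2.2.2.1
      show (1/2) * b v * F v ≤ 0
      nlinarith [mul_pos hpb (neg_pos.mpr (hall v hv))]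
    have hcge : K ≤ c u := by
      refine ge_lim_of_deriv_nonneg u K c (fun v => (1/2) * (n:ℝ) * c v * G v)
        (fun v hv => hc' v (hmemle hv hu)) (fun v hv => ?_) hlc
      have hpc := (hsys v (hmemle hv hu)).2.2.2.2.2
      have hGv : 0 < G v := by
        have h1 := hFGpos v (hmemle hv hu)
        have h2 := hall v hv
        linarith
      show 0 ≤ (1/2) * (n:ℝ) * c v * G v
      nlinarith [mul_pos (mul_pos hn0 hpc) hGv]
    obtain ⟨_, _, _, hpa, hpb, hpc⟩ := hsys u hu
    have : 0 < F u := by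
      simp only [hF]
      nlinarith
    linarith
  -- G is nonnegative on the trajectory
  have hGnn : ∀ u : ℝ, (u : EReal) < η → 0 ≤ G u := by
    intro u hu
    by_contra hneg
    push_neg at hneg
    have hall : ∀ v ≤ u, G v < 0 :=
      key_neg u G DG (fun v hv => hGd v (hmemle hv hu)) (fun v hv => hzeroG v (hmemle hv hu)) hneg
    have hcle : c u ≤ K := by
      refine le_lim_of_deriv_nonpos u K c (fun v => (1/2) * (n:ℝ) * c v * G v)
        (fun v hv => hc' v (hmemle hv hu)) (fun v hv => ?_) hlc
      have hpc := (hsys v (hmemle hv hu)).2.2.2.2.2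
      show (1/2) * (n:ℝ) * c v * G v ≤ 0
      nlinarith [mul_pos (mul_pos hn0 hpc) (neg_pos.mpr (hall v hv))]
    have hbge : K ≤ b u := by
      refine ge_lim_of_deriv_nonneg u K b (fun v => (1/2) * b v * F v)
        (fun v hv => hb' v (hmemle hv hu)) (fun v hv => ?_) hlb
      have hpb := (hsys v (hmemle hv hu)).2.2.2.2.1
      have hFv : 0 < F v := by
        have h1 := hFGpos v (hmemle hv hu)
        have h2 := hall v hv
        linarith
      show 0 ≤ (1/2) * b v * F v
      nlinarith [mul_pos hpb hFv]
    obtain ⟨_, _, _, hpa, hpb, hpc⟩ := hsys u hu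
    have hgpos : 0 < G u := by
      simp only [hG]
      nlinarith [mul_nonneg (neg_nonneg.mpr hμ) (mul_nonneg (sq_nonneg (a u)) (sq_nonneg (b u)))]
    linarith
  -- Monotonicity
  have hconv : Convex ℝ {u : ℝ | (u : EReal) < η} :=
    convex_iff_ordConnected.mpr ⟨fun x hx y hy z hz => hmemle hz.2 hy⟩
  have hmonoB : MonotoneOn b {u : ℝ | (u : EReal) < η} := by
    apply monotoneOn_of_deriv_nonneg hconv
    · exact fun x hx => ((hsys x hx).2.1).continuousAt.continuousWithinAt
    · intro x hx
      have hx' : (x : EReal) < η := interior_subset (s := {u : ℝ | (u : EReal) < η}) hx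
      exact ((hsys x hx').2.1).differentiableAt.differentiableWithinAt
    · intro x hx
      have hx' : (x : EReal) < η := interior_subset (s := {u : ℝ | (u : EReal) < η}) hx
      rw [(hb' x hx').deriv]
      have hpb := (hsys x hx').2.2.2.2.1
      nlinarith [mul_nonneg hpb.le (hFnn x hx')]
  have hmonoC : MonotoneOn c {u : ℝ | (u : EReal) < η} := by
    apply monotoneOn_of_deriv_nonneg hconv
    · exact fun x hx => ((hsys x hx).2.2.1).continuousAt.continuousWithinAt
    · intro x hx
      have hx' : (x : EReal) < η := interior_subset (s := {u : ℝ | (u : EReal) < η}) hx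
      exact ((hsys x hx').2.2.1).differentiableAt.differentiableWithinAt
    · intro x hx
      have hx' : (x : EReal) < η := interior_subset (s := {u : ℝ | (u : EReal) < η}) hx
      rw [(hc' x hx').deriv]
      have hpc := (hsys x hx').2.2.2.2.2
      nlinarith [mul_nonneg (mul_nonneg hn0.le hpc.le) (hGnn x hx')]
  refine ⟨hmonoB, hmonoC, fun u hu => ⟨?_, ?_⟩⟩
  · refine le_of_tendsto hlb ?_
    filter_upwards [eventually_le_atBot u] with v hv
    exact hmonoB (hmemle hv hu) hu hv
  · refine le_of_tendsto hlc ?_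
    filter_upwards [eventually_le_atBot u] with v hv
    exact hmonoC (hmemle hv hu) hu hv
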